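/- arXiv:2605.14688 — 4 statements merged into one kernel-verified Lean document; each statement's English description precedes it below -/
import Mathlib

section
/- Let λ ∈ (0,1) and θ > 0 be real numbers with θ ≥ 1/(1−λ). Let η, Γ : ℕ → ℝ be sequences satisfying η_{k+1} = (1−λ)·η_k + Γ_k for all k ∈ ℕ, and η_k + θ·Γ_k ≥ 0 for all k ∈ ℕ. If η_0 ≥ 0, then η_k ≥ 0 for all k ∈ ℕ. -/
/-- Lemma 1: nonnegativity of the internal variable of the dynamic ETM. -/
theorem dynamic_etm_eta_nonneg
    (lam θ : ℝ) (hlam0 : 0 < lam) (hlam1 : lam < 1) (hθ0 : 0 < θ)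
    (hθ : θ ≥ 1 / (1 - lam)) (η Γ : ℕ → ℝ)
    (hrec : ∀ k : ℕ, η (k + 1) = (1 - lam) * η k + Γ k)
    (htrig : ∀ k : ℕ, η k + θ * Γ k ≥ 0)
    (h0 : η 0 ≥ 0) :
    ∀ k : ℕ, η k ≥ 0 := by
  have h1lam : 0 < 1 - lam := by linarith
  have hinv : 1 / θ ≤ 1 - lam := by
    rw [div_le_iff₀ hθ0]
    rw [ge_iff_le, div_le_iff₀ h1lam] at hθ
    linarith [mul_comm θ (1 - lam)]
  intro k
  induction k with
  | zero => exact h0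
  | succ n ih =>
    have hΓ : Γ n ≥ -(η n / θ) := by
      have h := htrig n
      rw [ge_iff_le, neg_le, le_div_iff₀ hθ0]
      nlinarith
    have : η (n + 1) ≥ (1 - lam - 1 / θ) * η n := by
      rw [hrec n]
      have : -(η n / θ) = -(1/θ) * η n := by ring
      nlinarith
    have hnn : (1 - lam - 1 / θ) * η n ≥ 0 :=
      mul_nonneg (by linarith) ih
    linarith
end

section
/- Let n, m, p ∈ ℕ and let A1 ∈ ℝ^{n×n}, A2 ∈ ℝ^{n×p}, A3 ∈ ℝ^{n×m}, Ω1 ∈ ℝ^{p×n}, Ω2 ∈ ℝ^{p×p}, Ω3 ∈ ℝ^{p×m} be real matrices. Let X, Q̃_x, Q̃_e ∈ ℝ^{n×n} and Q̃_π, Q̃_δ ∈ ℝ^{p×p} be symmetric positive definite, let Z̃ ∈ ℝ^{p×p} be invertible, and let K̃ ∈ ℝ^{m×n}, L̃ ∈ ℝ^{m×p}. Let Φ be the symmetric block matrix with row/column block sizes (n, n, p, p, n, n, p), upper-triangular blocks: (1,1) = −X, (1,2) = 0, (1,3) = XΩ1ᵀ + K̃ᵀΩ3ᵀ, (1,4)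 = 0, (1,5) = XA1ᵀ + K̃ᵀA3ᵀ, (1,6) = X, (1,7) = 0; (2,2) = −Q̃_e, (2,3) = K̃ᵀΩ3ᵀ, (2,4) = 0, (2,5) = K̃ᵀA3ᵀ, (2,6) = 0, (2,7) = 0; (3,3) = (Ω2Z̃ + Ω3L̃) + (Ω2Z̃ + Ω3L̃)ᵀ, (3,4) = Ω3L̃, (3,5) = Z̃ᵀA2ᵀ + L̃ᵀA3ᵀ, (3,6) = 0, (3,7) = Z̃ᵀ; (4,4) = −Q̃_δ, (4,5) = L̃ᵀA3ᵀ, (4,6) = 0, (4,7) = 0; (5,5) = −X, (5,6) = 0, (5,7) = 0; (6,6) = −Q̃_x, (6,7) = 0; (7,7) = −Q̃_π, and lower blocks deduced by symmetry. If ζᵀΦζ < 0 for all ζ ≠ 0, then, setting P = X⁻¹, Z = (Z̃⁻¹)ᵀ, K = K̃X⁻¹, L = L̃Z̃⁻¹, Q_x = Q̃_x⁻¹, Q_e = X⁻¹Q̃_e X⁻¹, Q_π = Q̃_π⁻¹, Q_δ = (Z̃⁻¹)ᵀQ̃_δ Z̃⁻¹, the matrix Ψ built from these matrices (the symmetric block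 matrix with block sizes (n, n, p, p) and blocks Ψ11 = A_KᵀPA_K − P + Q_x, Ψ12 = A_KᵀPA3K, Ψ13 = A_KᵀPA_L + Ω_KᵀZᵀ, Ψ14 = A_KᵀPA3L, Ψ22 = KᵀA3ᵀPA3K − Q_e, Ψ23 = KᵀA3ᵀPA_L + KᵀΩ3ᵀZᵀ, Ψ24 = KᵀA3ᵀPA3L, Ψ33 = ZΩ_L + Ω_LᵀZᵀ + A_LᵀPA_L + Q_π, Ψ34 = A_LᵀPA3L + ZΩ3L, Ψ44 = LᵀA3ᵀPA3L − Q_δ, where A_K = A1 + A3K, Ω_K = Ω1 + Ω3K, A_L = A2 + A3L, Ω_L = Ω2 + Ω3L) satisfies ζᵀΨζ < 0 for all ζ ≠ 0. -/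
open Matrix

/-- The symmetric design block matrix `Φ` of inequality (16) of the paper,
with row/column block sizes `(n, n, p, p, n, n, p)`. -/
noncomputable def PhiMatrix {n m p : ℕ}
    (A1 : Matrix (Fin n) (Fin n) ℝ) (A2 : Matrix (Fin n) (Fin p) ℝ)
    (A3 : Matrix (Fin n) (Fin m) ℝ)
    (Ω1 : Matrix (Fin p) (Fin n) ℝ) (Ω2 : Matrix (Fin p) (Fin p) ℝ)
    (Ω3 : Matrix (Fin p) (Fin m) ℝ)
    (Kt : Matrix (Fin m) (Fin n) ℝ) (Lt : Matrix (Fin m) (Fin p) ℝ)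
    (Zt : Matrix (Fin p) (Fin p) ℝ)
    (Qtx Qte X : Matrix (Fin n) (Fin n) ℝ) (Qtπ Qtδ : Matrix (Fin p) (Fin p) ℝ) :
    Matrix (((Fin n ⊕ Fin n) ⊕ (Fin p ⊕ Fin p)) ⊕ ((Fin n ⊕ Fin n) ⊕ Fin p))
           (((Fin n ⊕ Fin n) ⊕ (Fin p ⊕ Fin p)) ⊕ ((Fin n ⊕ Fin n) ⊕ Fin p)) ℝ :=
  let Φ11 : Matrix (Fin n) (Fin n) ℝ := -X
  let Φ12 : Matrix (Fin n) (Fin n) ℝ := 0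
  let Φ13 : Matrix (Fin n) (Fin p) ℝ := X * Ω1ᵀ + Ktᵀ * Ω3ᵀ
  let Φ14 : Matrix (Fin n) (Fin p) ℝ := 0
  let Φ15 : Matrix (Fin n) (Fin n) ℝ := X * A1ᵀ + Ktᵀ * A3ᵀ
  let Φ16 : Matrix (Fin n) (Fin n) ℝ := X
  let Φ17 : Matrix (Fin n) (Fin p) ℝ := 0
  let Φ22 : Matrix (Fin n) (Fin n) ℝ := -Qte
  let Φ23 : Matrix (Fin n) (Fin p) ℝ := Ktᵀ * Ω3ᵀ
  let Φ24 : Matrix (Fin n) (Fin p) ℝ := 0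
  let Φ25 : Matrix (Fin n) (Fin n) ℝ := Ktᵀ * A3ᵀ
  let Φ26 : Matrix (Fin n) (Fin n) ℝ := 0
  let Φ27 : Matrix (Fin n) (Fin p) ℝ := 0
  let Φ33 : Matrix (Fin p) (Fin p) ℝ := (Ω2 * Zt + Ω3 * Lt) + (Ω2 * Zt + Ω3 * Lt)ᵀ
  let Φ34 : Matrix (Fin p) (Fin p) ℝ := Ω3 * Lt
  let Φ35 : Matrix (Fin p) (Fin n) ℝ := Ztᵀ * A2ᵀ + Ltᵀ * A3ᵀ
  let Φ36 : Matrix (Fin p) (Fin n) ℝ := 0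
  let Φ37 : Matrix (Fin p) (Fin p) ℝ := Ztᵀ
  let Φ44 : Matrix (Fin p) (Fin p) ℝ := -Qtδ
  let Φ45 : Matrix (Fin p) (Fin n) ℝ := Ltᵀ * A3ᵀ
  let Φ46 : Matrix (Fin p) (Fin n) ℝ := 0
  let Φ47 : Matrix (Fin p) (Fin p) ℝ := 0
  let Φ55 : Matrix (Fin n) (Fin n) ℝ := -X
  let Φ56 : Matrix (Fin n) (Fin n) ℝ := 0
  let Φ57 : Matrix (Fin n) (Fin p) ℝ := 0
  let Φ66 : Matrix (Fin n) (Fin n) ℝ := -Qtx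
  let Φ67 : Matrix (Fin n) (Fin p) ℝ := 0
  let Φ77 : Matrix (Fin p) (Fin p) ℝ := -Qtπ
  let B : Matrix ((Fin n ⊕ Fin n) ⊕ (Fin p ⊕ Fin p)) ((Fin n ⊕ Fin n) ⊕ Fin p) ℝ :=
    Matrix.fromBlocks
      (Matrix.fromBlocks Φ15 Φ16 Φ25 Φ26) (Matrix.fromRows Φ17 Φ27)
      (Matrix.fromBlocks Φ35 Φ36 Φ45 Φ46) (Matrix.fromRows Φ37 Φ47)
  Matrix.fromBlocks
    (Matrix.fromBlocks
      (Matrix.fromBlocks Φ11 Φ12 Φ12ᵀ Φ22)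
      (Matrix.fromBlocks Φ13 Φ14 Φ23 Φ24)
      (Matrix.fromBlocks Φ13ᵀ Φ23ᵀ Φ14ᵀ Φ24ᵀ)
      (Matrix.fromBlocks Φ33 Φ34 Φ34ᵀ Φ44))
    B
    Bᵀ
    (Matrix.fromBlocks
      (Matrix.fromBlocks Φ55 Φ56 Φ56ᵀ Φ66)
      (Matrix.fromRows Φ57 Φ67)
      (Matrix.fromRows Φ57 Φ67)ᵀ
      Φ77)

/-- The symmetric analysis block matrix `Ψ` of inequality (20) of the paper,
with row/column block sizes `(n, n, p, p)`. -/
noncomputable def PsiMatrix {n m p : ℕ}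
    (A1 : Matrix (Fin n) (Fin n) ℝ) (A2 : Matrix (Fin n) (Fin p) ℝ)
    (A3 : Matrix (Fin n) (Fin m) ℝ)
    (Ω1 : Matrix (Fin p) (Fin n) ℝ) (Ω2 : Matrix (Fin p) (Fin p) ℝ)
    (Ω3 : Matrix (Fin p) (Fin m) ℝ)
    (K : Matrix (Fin m) (Fin n) ℝ) (L : Matrix (Fin m) (Fin p) ℝ)
    (Z : Matrix (Fin p) (Fin p) ℝ) (P : Matrix (Fin n) (Fin n) ℝ)
    (Qx Qe : Matrix (Fin n) (Fin n) ℝ) (Qπ Qδ : Matrix (Fin p) (Fin p) ℝ) :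
    Matrix ((Fin n ⊕ Fin n) ⊕ (Fin p ⊕ Fin p)) ((Fin n ⊕ Fin n) ⊕ (Fin p ⊕ Fin p)) ℝ :=
  let AK := A1 + A3 * K
  let ΩK := Ω1 + Ω3 * K
  let AL := A2 + A3 * L
  let ΩL := Ω2 + Ω3 * L
  let Ψ11 := AKᵀ * P * AK - P + Qx
  let Ψ12 := AKᵀ * P * (A3 * K)
  let Ψ13 := AKᵀ * P * AL + ΩKᵀ * Zᵀ
  let Ψ14 := AKᵀ * P * (A3 * L)
  let Ψ22 := Kᵀ * A3ᵀ * P * A3 * K - Qe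
  let Ψ23 := Kᵀ * A3ᵀ * P * AL + Kᵀ * Ω3ᵀ * Zᵀ
  let Ψ24 := Kᵀ * A3ᵀ * P * (A3 * L)
  let Ψ33 := Z * ΩL + ΩLᵀ * Zᵀ + ALᵀ * P * AL + Qπ
  let Ψ34 := ALᵀ * P * (A3 * L) + Z * (Ω3 * L)
  let Ψ44 := Lᵀ * A3ᵀ * P * A3 * L - Qδ
  Matrix.fromBlocks
    (Matrix.fromBlocks Ψ11 Ψ12 Ψ12ᵀ Ψ22)
    (Matrix.fromBlocks Ψ13 Ψ14 Ψ23 Ψ24)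
    (Matrix.fromBlocks Ψ13ᵀ Ψ23ᵀ Ψ14ᵀ Ψ24ᵀ)
    (Matrix.fromBlocks Ψ33 Ψ34 Ψ34ᵀ Ψ44)


/-!
`Ψ = Tᵀ Φ T` for the injective matrix `T = lmiCongruence …`, so `Ψ` inherits negative definiteness
from `Φ`. The first four block rows of `T` are the change of variables `diag(X⁻¹, X⁻¹, Z̃⁻¹, Z̃⁻¹)`;
the last three are `-Φ₂₂⁻¹ Φ₁₂ᵀ` times it, where `Φ₂₂ = diag(-X, -Q̃x, -Q̃π)` is the lower right
corner of `Φ`. Thus `Ψ` is the Schur complement of `Φ₂₂` in `Φ`, written in the variables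
`P, Z, K, L`.
-/

namespace Matrix

variable {R m n m₁ m₂ n₁ n₂ : Type*}

lemma fromCols_add [Add R] (A₁ B₁ : Matrix m n₁ R) (A₂ B₂ : Matrix m n₂ R) :
    fromCols A₁ A₂ + fromCols B₁ B₂ = fromCols (A₁ + B₁) (A₂ + B₂) := by
  ext i (j | j) <;> rfl

lemma mulVec_injective_fromRows [Semiring R] [Fintype n] {A : Matrix m₁ n R} (B : Matrix m₂ n R)
    (hA : Function.Injective A.mulVec) : Function.Injective (fromRows A B).mulVec := by
  intro x y hxy
  apply hA
  simpa only [fromRows_mulVec, Sum.elim_comp_inl] using congrArg (· ∘ Sum.inl) hxy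

lemma transpose_mul_mul_same_dotProduct_mulVec_neg [CommSemiring R] [Preorder R] [Fintype m]
    [Fintype n] {A : Matrix m m R} {B : Matrix m n R} (hA : ∀ y : m → R, y ≠ 0 → y ⬝ᵥ A *ᵥ y < 0)
    (hB : Function.Injective B.mulVec) : ∀ x : n → R, x ≠ 0 → x ⬝ᵥ (Bᵀ * A * B) *ᵥ x < 0 := by
  intro x hx
  have hBx : B *ᵥ x ≠ 0 := fun h => hx <| hB.eq_iff' (mulVec_zero _) |>.1 h
  calc x ⬝ᵥ (Bᵀ * A * B) *ᵥ x = B *ᵥ x ⬝ᵥ A *ᵥ (B *ᵥ x) := by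
        rw [← mulVec_mulVec, ← mulVec_mulVec, dotProduct_mulVec, vecMul_transpose]
    _ < 0 := hA _ hBx

end Matrix

section Congruence

variable {n m p : ℕ} (A1 : Matrix (Fin n) (Fin n) ℝ) (A2 : Matrix (Fin n) (Fin p) ℝ)
  (A3 : Matrix (Fin n) (Fin m) ℝ) (Ω1 : Matrix (Fin p) (Fin n) ℝ) (Ω2 : Matrix (Fin p) (Fin p) ℝ)
  (Ω3 : Matrix (Fin p) (Fin m) ℝ) (X Qtx Qte : Matrix (Fin n) (Fin n) ℝ)
  (Qtπ Qtδ Zt : Matrix (Fin p) (Fin p) ℝ) (Kt : Matrix (Fin m) (Fin n) ℝ)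
  (Lt : Matrix (Fin m) (Fin p) ℝ)

noncomputable def lmiCongruence (K : Matrix (Fin m) (Fin n) ℝ) (L : Matrix (Fin m) (Fin p) ℝ) :
    Matrix (((Fin n ⊕ Fin n) ⊕ (Fin p ⊕ Fin p)) ⊕ ((Fin n ⊕ Fin n) ⊕ Fin p))
      ((Fin n ⊕ Fin n) ⊕ (Fin p ⊕ Fin p)) ℝ :=
  fromRows
    (fromBlocks (fromBlocks X⁻¹ 0 0 X⁻¹) 0 0 (fromBlocks Zt⁻¹ 0 0 Zt⁻¹))
    (fromRows
      (fromRows (X⁻¹ * fromCols (fromCols (A1 + A3 * K) (A3 * K)) (fromCols (A2 + A3 * L) (A3 * L)))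
        (fromCols (fromCols Qtx⁻¹ 0) 0))
      (fromCols 0 (fromCols Qtπ⁻¹ 0)))

variable {A1 A2 A3 X Qtx Qtπ Zt} in
lemma mulVec_injective_lmiCongruence {K : Matrix (Fin m) (Fin n) ℝ} {L : Matrix (Fin m) (Fin p) ℝ}
    (hX : IsUnit X.det) (hZt : IsUnit Zt.det) : Function.Injective (lmiCongruence A1 A2 A3 X Qtx Qtπ Zt K L).mulVec := by
  refine mulVec_injective_fromRows _ (mulVec_injective_iff_isUnit.mpr ?_)
  have hX' := isUnit_nonsing_inv_det X hX
  have hZt' := isUnit_nonsing_inv_det Zt hZt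
  rw [isUnit_iff_isUnit_det, det_fromBlocks_zero₂₁, det_fromBlocks_zero₂₁, det_fromBlocks_zero₂₁]
  exact (hX'.mul hX').mul (hZt'.mul hZt')

set_option maxHeartbeats 400000 in
theorem PsiMatrix_eq_transpose_mul_PhiMatrix_mul (hXs : Xᵀ = X) (hX : IsUnit X.det)
    (hZt : IsUnit Zt.det) (hQtx : IsUnit Qtx.det) (hQtπ : IsUnit Qtπ.det) :
    PsiMatrix A1 A2 A3 Ω1 Ω2 Ω3 (Kt * X⁻¹) (Lt * Zt⁻¹) (Zt⁻¹)ᵀ X⁻¹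
        Qtx⁻¹ (X⁻¹ * Qte * X⁻¹) Qtπ⁻¹ ((Zt⁻¹)ᵀ * Qtδ * Zt⁻¹) =
      (lmiCongruence A1 A2 A3 X Qtx Qtπ Zt (Kt * X⁻¹) (Lt * Zt⁻¹))ᵀ *
        PhiMatrix A1 A2 A3 Ω1 Ω2 Ω3 Kt Lt Zt Qtx Qte X Qtπ Qtδ *
        lmiCongruence A1 A2 A3 X Qtx Qtπ Zt (Kt * X⁻¹) (Lt * Zt⁻¹) := by
  have hZtT : IsUnit Ztᵀ.det := by rwa [det_transpose]
  simp only [lmiCongruence, PhiMatrix, PsiMatrix]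
  -- bring every block matrix into the shape `fromRows (fromCols ..) (fromCols ..)`, splitting zeros
  simp only [← fromRows_zero, ← fromCols_zero, fromCols_fromRows_eq_fromBlocks,
    ← fromRows_fromCols_eq_fromBlocks, fromCols_mul_fromRows, fromRows_mul, mul_fromCols,
    fromCols_add, transpose_fromRows, transpose_fromCols, fromRows_ext_iff, fromCols_ext_iff,
    transpose_zero, transpose_transpose, Matrix.zero_mul, Matrix.mul_zero, add_zero, zero_add]
  simp only [transpose_mul, transpose_add, transpose_transpose, transpose_nonsing_inv, hXs,
    Matrix.mul_add, Matrix.add_mul, Matrix.mul_assoc, Matrix.mul_neg, Matrix.neg_mul,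
    nonsing_inv_mul_cancel_left _ _ hX, nonsing_inv_mul_cancel_left _ _ hZtT,
    nonsing_inv_mul _ hX, mul_nonsing_inv _ hX, nonsing_inv_mul _ hZtT, mul_nonsing_inv _ hZt,
    mul_nonsing_inv _ hQtx, mul_nonsing_inv _ hQtπ, Matrix.mul_one, Matrix.one_mul]
  refine ⟨⟨⟨⟨?_, ?_⟩, ?_, ?_⟩, ⟨?_, ?_⟩, ?_, ?_⟩, ⟨⟨?_, ?_⟩, ?_, ?_⟩, ⟨?_, ?_⟩, ?_, ?_⟩ <;> abel

end Congruence

theorem design_lmi_implies_analysis_lmi_general {n m p : ℕ}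
    (A1 : Matrix (Fin n) (Fin n) ℝ) (A2 : Matrix (Fin n) (Fin p) ℝ)
    (A3 : Matrix (Fin n) (Fin m) ℝ)
    (Ω1 : Matrix (Fin p) (Fin n) ℝ) (Ω2 : Matrix (Fin p) (Fin p) ℝ)
    (Ω3 : Matrix (Fin p) (Fin m) ℝ)
    (X Qtx Qte : Matrix (Fin n) (Fin n) ℝ)
    (Qtπ Qtδ : Matrix (Fin p) (Fin p) ℝ)
    (hX : X.PosDef) (hQtx : Qtx.PosDef)
    (hQtπ : Qtπ.PosDef)
    (Zt : Matrix (Fin p) (Fin p) ℝ) (hZt : IsUnit Zt.det)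
    (Kt : Matrix (Fin m) (Fin n) ℝ) (Lt : Matrix (Fin m) (Fin p) ℝ)
    (hΦ : ∀ ζ : ((Fin n ⊕ Fin n) ⊕ (Fin p ⊕ Fin p)) ⊕ ((Fin n ⊕ Fin n) ⊕ Fin p) → ℝ,
      ζ ≠ 0 →
      ζ ⬝ᵥ ((PhiMatrix A1 A2 A3 Ω1 Ω2 Ω3 Kt Lt Zt Qtx Qte X Qtπ Qtδ) *ᵥ ζ) < 0) :
    ∀ ζ : (Fin n ⊕ Fin n) ⊕ (Fin p ⊕ Fin p) → ℝ, ζ ≠ 0 →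
      ζ ⬝ᵥ ((PsiMatrix A1 A2 A3 Ω1 Ω2 Ω3 (Kt * X⁻¹) (Lt * Zt⁻¹) (Zt⁻¹)ᵀ X⁻¹
        Qtx⁻¹ (X⁻¹ * Qte * X⁻¹) Qtπ⁻¹ ((Zt⁻¹)ᵀ * Qtδ * Zt⁻¹)) *ᵥ ζ) < 0 := by
  have hXs : Xᵀ = X := (isHermitian_iff_isSymm.mp hX.isHermitian).eq
  have hXu : IsUnit X.det := hX.det_pos.ne'.isUnit
  rw [PsiMatrix_eq_transpose_mul_PhiMatrix_mul (hXs := hXs) (hX := hXu) (hZt := hZt)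
    (hQtx := hQtx.det_pos.ne'.isUnit) (hQtπ := hQtπ.det_pos.ne'.isUnit)]
  exact transpose_mul_mul_same_dotProduct_mulVec_neg hΦ (mulVec_injective_lmiCongruence hXu hZt)

/-- Congruence transformations, Schur complements and the change of variables
`P = X⁻¹`, `Z = Z̃⁻ᵀ`, `K = K̃X⁻¹`, `L = L̃Z̃⁻¹`, `Qx = Q̃x⁻¹`, `Qe = X⁻¹Q̃e X⁻¹`,
`Qπ = Q̃π⁻¹`, `Qδ = Z̃⁻ᵀQ̃δ Z̃⁻¹` convert the design LMI `Φ ≺ 0` into the analysis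
inequality `Ψ ≺ 0`. -/
theorem design_lmi_implies_analysis_lmi {n m p : ℕ}
    (A1 : Matrix (Fin n) (Fin n) ℝ) (A2 : Matrix (Fin n) (Fin p) ℝ)
    (A3 : Matrix (Fin n) (Fin m) ℝ)
    (Ω1 : Matrix (Fin p) (Fin n) ℝ) (Ω2 : Matrix (Fin p) (Fin p) ℝ)
    (Ω3 : Matrix (Fin p) (Fin m) ℝ)
    (X Qtx Qte : Matrix (Fin n) (Fin n) ℝ)
    (Qtπ Qtδ : Matrix (Fin p) (Fin p) ℝ)
    (hX : X.PosDef) (hQtx : Qtx.PosDef) (hQte : Qte.PosDef)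
    (hQtπ : Qtπ.PosDef) (hQtδ : Qtδ.PosDef)
    (Zt : Matrix (Fin p) (Fin p) ℝ) (hZt : IsUnit Zt.det)
    (Kt : Matrix (Fin m) (Fin n) ℝ) (Lt : Matrix (Fin m) (Fin p) ℝ)
    (hΦ : ∀ ζ : ((Fin n ⊕ Fin n) ⊕ (Fin p ⊕ Fin p)) ⊕ ((Fin n ⊕ Fin n) ⊕ Fin p) → ℝ,
      ζ ≠ 0 →
      ζ ⬝ᵥ ((PhiMatrix A1 A2 A3 Ω1 Ω2 Ω3 Kt Lt Zt Qtx Qte X Qtπ Qtδ) *ᵥ ζ) < 0) :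
    ∀ ζ : (Fin n ⊕ Fin n) ⊕ (Fin p ⊕ Fin p) → ℝ, ζ ≠ 0 →
      ζ ⬝ᵥ ((PsiMatrix A1 A2 A3 Ω1 Ω2 Ω3 (Kt * X⁻¹) (Lt * Zt⁻¹) (Zt⁻¹)ᵀ X⁻¹
        Qtx⁻¹ (X⁻¹ * Qte * X⁻¹) Qtπ⁻¹ ((Zt⁻¹)ᵀ * Qtδ * Zt⁻¹)) *ᵥ ζ) < 0 :=
  design_lmi_implies_analysis_lmi_general A1 A2 A3 Ω1 Ω2 Ω3 X Qtx Qte Qtπ Qtδ hX hQtx hQtπ Zt hZt Kt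
    Lt hΦ
end

section
/- Let r, q ∈ ℕ and let Φ : {0,1}^r × {0,1}^r → ℝ^{q×q} be a family of real matrices. For multi-indices m, n ∈ {0,1}^r, let S(m,n) = {(i,j) ∈ {0,1}^r × {0,1}^r : for every coordinate t, the unordered pair {i_t, j_t} equals the unordered pair {m_t, n_t} (as multisets)}. Suppose that for every pair (m, n) ∈ {0,1}^r × {0,1}^r, the matrix ∑_{(i,j) ∈ S(m,n)} Φ(i,j) satisfies ζᵀ(∑_{(i,j) ∈ S(m,n)} Φ(i,j))ζ < 0 for all ζ ≠ 0. Then for every w : Fin r → [0,1], defining α_i = ∏_{t=1}^r w_t^{i_t} (with w_t^1 = w_t and w_t^0 = 1 − w_t), the matrix ∑_{i ∈ {0,1}^r} ∑_{j ∈ {0,1}^r} α_i · α_j · Φ(i,j) satisfies ζᵀ(∑_i ∑_j α_i α_j Φ(i,j))ζ < 0 for all ζ ≠ 0. -/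
open Matrix

/-!
The weight `α_i α_j` depends only on the unordered coordinate pairs `{i_t, j_t}`, so it is
constant on each class `S(m,n)`. Grouping the quadratic form `ζᵀ (∑ α_i α_j Φ(i,j)) ζ` by these
classes writes it as a sum of nonnegative multiples of the negative vertex sums; the multiple
of the class of `(i,i)` is positive as soon as `α_i > 0`, e.g. for `i_t = [0 < w_t]`.
-/

open Finset in
theorem sum_mul_neg_of_sum_fiber_neg {ι κ : Type*} [Fintype ι] [DecidableEq κ]
    (g : ι → κ) (c f : ι → ℝ) (hc : ∀ i, 0 ≤ c i) (hc_fiber : ∀ i j, g i = g j → c i = c j)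
    (hf : ∀ i, ∑ j with g j = g i, f j < 0) (hc_pos : ∃ i, 0 < c i) :
    ∑ i, c i * f i < 0 := by
  have hfiber : ∀ i, ∑ j with g j = g i, c j * f j = c i * ∑ j with g j = g i, f j := by
    intro i
    rw [mul_sum]
    exact sum_congr rfl fun j hj => by rw [hc_fiber j i (mem_filter.1 hj).2]
  rw [← sum_fiberwise_of_maps_to (t := univ.image g) (fun i _ => mem_image_of_mem g (mem_univ i))]
  obtain ⟨i₀, hi₀⟩ := hc_pos
  refine sum_neg' (fun k hk => ?_) ⟨g i₀, mem_image_of_mem g (mem_univ i₀), ?_⟩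
  · obtain ⟨i, -, rfl⟩ := mem_image.1 hk
    rw [hfiber]
    exact mul_nonpos_of_nonneg_of_nonpos (hc i) (hf i).le
  · rw [hfiber]
    exact mul_neg_of_pos_of_neg hi₀ (hf i₀)

/-- The class `S(m,n)` of the paper is the fibre of `coordPairs` through `(m, n)`. -/
def coordPairs {σ : Type*} (ij : (σ → Bool) × (σ → Bool)) : σ → Multiset Bool :=
  fun t => {ij.1 t, ij.2 t}

def multilinearWeight {σ : Type*} [Fintype σ] (w : σ → ℝ) (i : σ → Bool) : ℝ :=
  ∏ t, if i t then w t else 1 - w t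

section multilinearWeight

variable {σ : Type*} [Fintype σ] (w : σ → ℝ)

theorem multilinearWeight_nonneg (hw : ∀ t, 0 ≤ w t ∧ w t ≤ 1) (i : σ → Bool) :
    0 ≤ multilinearWeight w i :=
  Finset.prod_nonneg fun t _ => by
    split_ifs
    · exact (hw t).1
    · exact sub_nonneg.2 (hw t).2

theorem exists_multilinearWeight_pos : ∃ i, 0 < multilinearWeight w i :=
  ⟨fun t => decide (0 < w t), Finset.prod_pos fun t _ => by
    by_cases h : 0 < w t <;> simp [h]; linarith⟩

theorem multilinearWeight_mul_eq_of_pairs_eq {i j m n : σ → Bool}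
    (h : ∀ t, ({i t, j t} : Multiset Bool) = {m t, n t}) :
    multilinearWeight w i * multilinearWeight w j =
      multilinearWeight w m * multilinearWeight w n := by
  have hpair : ∀ a b : σ → Bool, multilinearWeight w a * multilinearWeight w b =
      ∏ t, (({a t, b t} : Multiset Bool).map fun x => if x then w t else 1 - w t).prod := by
    intro a b
    simp [multilinearWeight, ← Finset.prod_mul_distrib]
  simp only [hpair, h]

end multilinearWeight

/-- Polytopic relaxation: if for every pair of multi-indices `(m, n)` the
permutation-grouped vertex sum `∑_{(i,j) ∈ S(m,n)} Φ(i,j)` is negative definite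
(as a quadratic form), then for every choice of weights `w : Fin r → [0,1]` the
doubly convex combination `∑_i ∑_j α_i α_j Φ(i,j)` with multilinear weights
`α_i = ∏_t w_t^{i_t}` is negative definite as well. -/
theorem polytopic_relaxation {r q : ℕ}
    (Φ : (Fin r → Bool) → (Fin r → Bool) → Matrix (Fin q) (Fin q) ℝ)
    (hvertex : ∀ mi ni : Fin r → Bool, ∀ ζ : Fin q → ℝ, ζ ≠ 0 →
      ζ ⬝ᵥ ((∑ ij ∈ Finset.univ.filter
          (fun ij : (Fin r → Bool) × (Fin r → Bool) =>
            ∀ t, ({ij.1 t, ij.2 t} : Multiset Bool) = {mi t, ni t}),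
          Φ ij.1 ij.2) *ᵥ ζ) < 0) :
    ∀ w : Fin r → ℝ, (∀ t, 0 ≤ w t ∧ w t ≤ 1) →
      ∀ ζ : Fin q → ℝ, ζ ≠ 0 →
        ζ ⬝ᵥ ((∑ i : Fin r → Bool, ∑ j : Fin r → Bool,
          ((∏ t, (if i t then w t else 1 - w t)) *
           (∏ t, (if j t then w t else 1 - w t))) • Φ i j) *ᵥ ζ) < 0 := by
  intro w hw ζ hζ
  obtain ⟨i₀, hi₀⟩ := exists_multilinearWeight_pos w
  have hclass : ∀ mn : (Fin r → Bool) × (Fin r → Bool),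
      ∑ ij with coordPairs ij = coordPairs mn, ζ ⬝ᵥ (Φ ij.1 ij.2 *ᵥ ζ) < 0 := by
    intro mn
    have h := hvertex mn.1 mn.2 ζ hζ
    rw [sum_mulVec, dotProduct_sum] at h
    simpa only [coordPairs, funext_iff] using h
  have hgrouped := sum_mul_neg_of_sum_fiber_neg coordPairs
    (fun ij => multilinearWeight w ij.1 * multilinearWeight w ij.2)
    (fun ij => ζ ⬝ᵥ (Φ ij.1 ij.2 *ᵥ ζ))
    (fun _ => mul_nonneg (multilinearWeight_nonneg w hw _) (multilinearWeight_nonneg w hw _))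
    (fun _ _ h => multilinearWeight_mul_eq_of_pairs_eq w (congrFun h)) hclass
    ⟨(i₀, i₀), mul_pos hi₀ hi₀⟩
  simp only [sum_mulVec, dotProduct_sum, smul_mulVec, dotProduct_smul, smul_eq_mul]
  rw [← Fintype.sum_prod_type']
  exact hgrouped
end

section
/- Let n, h ∈ ℕ, let P ∈ ℝ^{n×n} be symmetric positive definite, and let b_1, …, b_h ∈ ℝ^n be such that, for every j ∈ {1, …, h}, the (1+n)×(1+n) block matrix [[1, b_jᵀP⁻¹],[P⁻¹b_j, P⁻¹]] is positive semidefinite. Let x : ℕ → ℝ^n and η : ℕ → ℝ be sequences with η_k ≥ 0 for all k, such that the sequence W_k = x_kᵀP·x_k + η_k is nonincreasing and W_0 ≤ 1. Then for every k ∈ ℕ and every j ∈ {1, …, h}, b_jᵀx_k ≤ 1; that is, x_k remains for all time in the polyhedron D_x = {x ∈ ℝ^n : b_jᵀx ≤ 1 for all j ∈ {1, …, h}}. -/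
/-!
Testing the LMI `[[1, bᵀP⁻¹], [P⁻¹b, P⁻¹]] ⪰ 0` against the vector `(-1, P x)` gives
`2 bᵀx ≤ 1 + xᵀP x`. Along a trajectory `xₖᵀP xₖ ≤ Wₖ ≤ W₀ ≤ 1` because `η ≥ 0` and `W` is
nonincreasing, hence `bᵀxₖ ≤ 1`.
-/

open Matrix

namespace Matrix

theorem two_mul_dotProduct_le_of_posSemidef_fromBlocks_one {m : Type*} [Fintype m]
    {u v : m → ℝ} {X : Matrix m m ℝ}
    (hM : (fromBlocks (1 : Matrix (Fin 1) (Fin 1) ℝ) (replicateRow (Fin 1) u)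
      (replicateCol (Fin 1) v) X).PosSemidef) (y : m → ℝ) :
    2 * (u ⬝ᵥ y) ≤ 1 + y ⬝ᵥ (X *ᵥ y) := by
  have hvu : v = u := by
    have h := (isHermitian_fromBlocks_iff.mp hM.isHermitian).2.1
    rw [conjTranspose_replicateRow, star_trivial, replicateCol_inj] at h
    exact h.symm
  subst hvu
  have hcol : replicateCol (Fin 1) v *ᵥ (fun _ => -1) = -v := by
    ext i
    simp [mulVec, dotProduct]
  have hq := hM.dotProduct_mulVec_nonneg (Sum.elim (fun _ => -1) y)
  simp only [fromBlocks_mulVec, star_trivial, sumElim_dotProduct_sumElim, Sum.elim_comp_inl,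
    Sum.elim_comp_inr, one_mulVec, replicateRow_mulVec_eq_const, hcol, dotProduct_add,
    dotProduct_neg, dotProduct_comm y v] at hq
  have hone : (fun _ : Fin 1 => (-1 : ℝ)) ⬝ᵥ (fun _ => -1) = 1 := by simp [dotProduct]
  have hconst : (fun _ : Fin 1 => (-1 : ℝ)) ⬝ᵥ Function.const (Fin 1) (v ⬝ᵥ y) = -(v ⬝ᵥ y) := by
    simp [dotProduct]
  linarith

theorem two_mul_dotProduct_le_of_posSemidef_fromBlocks_inv {m : Type*} [Fintype m]
    [DecidableEq m] {P : Matrix m m ℝ} (hP : IsUnit P.det) {b : m → ℝ}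
    (hM : (fromBlocks (1 : Matrix (Fin 1) (Fin 1) ℝ) (replicateRow (Fin 1) (b ᵥ* P⁻¹))
      (replicateCol (Fin 1) (P⁻¹ *ᵥ b)) P⁻¹).PosSemidef) (x : m → ℝ) :
    2 * (b ⬝ᵥ x) ≤ 1 + x ⬝ᵥ (P *ᵥ x) := by
  have hlin : (b ᵥ* P⁻¹) ⬝ᵥ (P *ᵥ x) = b ⬝ᵥ x := by
    rw [dotProduct_mulVec, vecMul_vecMul, nonsing_inv_mul _ hP, vecMul_one]
  have hquad : (P *ᵥ x) ⬝ᵥ (P⁻¹ *ᵥ (P *ᵥ x)) = x ⬝ᵥ (P *ᵥ x) := by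
    rw [mulVec_mulVec, nonsing_inv_mul _ hP, one_mulVec, dotProduct_comm]
  simpa only [hlin, hquad] using two_mul_dotProduct_le_of_posSemidef_fromBlocks_one hM (P *ᵥ x)

end Matrix

/-- Forward-invariance conclusion of Theorem 1: if the LMIs
`[[1, b_jᵀP⁻¹],[P⁻¹b_j, P⁻¹]] ⪰ 0` hold, `η_k ≥ 0`, and
`W_k = x_kᵀP x_k + η_k` is nonincreasing with `W_0 ≤ 1`, then the state never
leaves the polyhedron `D_x = {x : b_jᵀx ≤ 1 ∀j}`. -/
theorem trajectories_stay_in_polyhedron {n h : ℕ}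
    (P : Matrix (Fin n) (Fin n) ℝ) (hP : P.PosDef)
    (b : Fin h → Fin n → ℝ)
    (hLMI : ∀ j : Fin h, (Matrix.fromBlocks (1 : Matrix (Fin 1) (Fin 1) ℝ)
        (Matrix.replicateRow (Fin 1) ((b j) ᵥ* P⁻¹)) (Matrix.replicateCol (Fin 1) (P⁻¹ *ᵥ (b j)))
        P⁻¹).PosSemidef)
    (x : ℕ → Fin n → ℝ) (η : ℕ → ℝ)
    (hη : ∀ k, 0 ≤ η k)
    (hW : Antitone fun k => x k ⬝ᵥ (P *ᵥ x k) + η k)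
    (hW0 : x 0 ⬝ᵥ (P *ᵥ x 0) + η 0 ≤ 1) :
    ∀ (k : ℕ) (j : Fin h), b j ⬝ᵥ x k ≤ 1 := by
  intro k j
  have hlevel : x k ⬝ᵥ (P *ᵥ x k) + η k ≤ 1 := (hW k.zero_le).trans hW0
  have hbx := two_mul_dotProduct_le_of_posSemidef_fromBlocks_inv
    (isUnit_iff_ne_zero.mpr hP.det_pos.ne') (hLMI j) (x k)
  linarith [hη k]
end
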